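/- arXiv:0808.0301 — 2 statements merged into one kernel-verified Lean document; each statement's English description precedes it below -/
import Mathlib

section
/- D_X is closed under α and L: if f ∈ D_X, then α(f) ∈ D_X and L(f) ∈ D_X. -/
open scoped ENNReal
open Classical
set_option linter.unusedSectionVars false
set_option synthInstance.maxHeartbeats 1000000
set_option maxHeartbeats 1000000

noncomputable section

variable {𝔞 : Type*} [Fintype 𝔞] [Nonempty 𝔞] [TopologicalSpace 𝔞] [DiscreteTopology 𝔞]

/-- The one-sided shift map on the full one-sided shift `𝔞^ℕ`. -/
def shift (x : ℕ → 𝔞) : ℕ → 𝔞 := fun n => x (n + 1)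

/-- Concatenation `u x` of a finite word `u` with an infinite sequence `x`. -/
def wcat (u : List 𝔞) (x : ℕ → 𝔞) : ℕ → 𝔞 := fun n =>
  if h : n < u.length then u.get ⟨n, h⟩ else x (n - u.length)

/-- `l∞(X)`: the C*-algebra of bounded complex-valued functions on `X`,
with pointwise operations and the supremum norm. -/
abbrev Linf (X : Set (ℕ → 𝔞)) : Type _ := lp (fun _ : X => ℂ) ∞

/-- The set `C(u,v) = {vx : x ∈ X, vx ∈ X, ux ∈ X}`. -/
def cyl (X : Set (ℕ → 𝔞)) (u v : List 𝔞) : Set (ℕ → 𝔞) :=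
  {y | ∃ x, x ∈ X ∧ wcat u x ∈ X ∧ wcat v x ∈ X ∧ y = wcat v x}

/-- The indicator function of a subset `S`, as an element of `l∞(X)`. -/
def chi (X S : Set (ℕ → 𝔞)) : Linf X :=
  ⟨fun x => S.indicator (fun _ => (1 : ℂ)) (x : ℕ → 𝔞),
    memℓp_infty ⟨1, by
      rintro r ⟨x, rfl⟩
      by_cases h : (x : ℕ → 𝔞) ∈ S <;> simp [Set.indicator_apply, h]⟩⟩

/-- `D_X`: the smallest C*-subalgebra (norm-closed, star-closed subalgebra) of `l∞(X)`
containing the indicator functions `χ_{C(u,v)}` for all words `u, v`. -/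
def Dalg (X : Set (ℕ → 𝔞)) : NonUnitalStarSubalgebra ℂ (Linf X) :=
  (NonUnitalStarAlgebra.adjoin ℂ
    {f : Linf X | ∃ u v : List 𝔞, f = chi X (cyl X u v)}).topologicalClosure

lemma chi_cyl_mem_Dalg (X : Set (ℕ → 𝔞)) (u v : List 𝔞) : chi X (cyl X u v) ∈ Dalg X :=
  (NonUnitalStarAlgebra.adjoin ℂ _).le_topologicalClosure
    (NonUnitalStarAlgebra.subset_adjoin ℂ _ ⟨u, v, rfl⟩)

/-- The map `α : l∞(X) → l∞(X)`, `α(f)(x) = f(σ x)`. -/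
def alphaMap (X : Set (ℕ → 𝔞)) (hX : ∀ x ∈ X, shift x ∈ X) (f : Linf X) : Linf X :=
  ⟨fun x => f ⟨shift (x : ℕ → 𝔞), hX _ x.2⟩,
    memℓp_infty ⟨‖f‖, by
      rintro r ⟨x, rfl⟩
      exact lp.norm_apply_le_norm ENNReal.top_ne_zero f _⟩⟩

/-- The set `σ⁻¹({x})` of preimages of `x` in `X` under the shift. -/
def preims (X : Set (ℕ → 𝔞)) (x : ℕ → 𝔞) : Set X :=
  {y : X | shift (y : ℕ → 𝔞) = x}

lemma preims_finite (X : Set (ℕ → 𝔞)) (x : ℕ → 𝔞) : (preims X x).Finite := by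
  apply Set.Finite.of_finite_image (f := fun y : X => (y : ℕ → 𝔞) 0) (Set.toFinite _)
  intro y hy z hz h
  apply Subtype.ext
  funext n
  cases n with
  | zero => exact h
  | succ m =>
    have hy' : shift (y : ℕ → 𝔞) = x := hy
    have hz' : shift (z : ℕ → 𝔞) = x := hz
    exact congrFun (hy'.trans hz'.symm) m

lemma aux_norm_le (X : Set (ℕ → 𝔞)) (f : Linf X) (S : Set X) (hS : S.Finite) :
    ‖((S.ncard : ℂ))⁻¹ * ∑ᶠ y ∈ S, f y‖ ≤ ‖f‖ := by
  rw [finsum_mem_eq_finite_toFinset_sum _ hS]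
  have hcard : S.ncard = hS.toFinset.card := Set.ncard_eq_toFinset_card _ hS
  rcases Nat.eq_zero_or_pos hS.toFinset.card with h0 | hpos
  · have he : hS.toFinset = ∅ := Finset.card_eq_zero.mp h0
    rw [he]
    simp only [Finset.sum_empty, mul_zero, norm_zero]
    exact norm_nonneg f
  · have hb : ‖∑ y ∈ hS.toFinset, (f : ∀ _ : X, ℂ) y‖ ≤ (hS.toFinset.card : ℝ) * ‖f‖ := by
      calc ‖∑ y ∈ hS.toFinset, (f : ∀ _ : X, ℂ) y‖ ≤ ∑ y ∈ hS.toFinset, ‖(f : ∀ _ : X, ℂ) y‖ :=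
            norm_sum_le _ _
      _ ≤ hS.toFinset.card • ‖f‖ := Finset.sum_le_card_nsmul _ _ _
            (fun y _ => lp.norm_apply_le_norm ENNReal.top_ne_zero f y)
      _ = (hS.toFinset.card : ℝ) * ‖f‖ := nsmul_eq_mul _ _
    have hno : ‖((S.ncard : ℂ))⁻¹‖ = ((hS.toFinset.card : ℝ))⁻¹ := by
      rw [norm_inv, hcard]
      norm_num
    calc ‖((S.ncard : ℂ))⁻¹ * ∑ y ∈ hS.toFinset, (f : ∀ _ : X, ℂ) y‖
        = ((hS.toFinset.card : ℝ))⁻¹ * ‖∑ y ∈ hS.toFinset, (f : ∀ _ : X, ℂ) y‖ := by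
          rw [norm_mul, hno]
    _ ≤ ((hS.toFinset.card : ℝ))⁻¹ * ((hS.toFinset.card : ℝ) * ‖f‖) := by
          apply mul_le_mul_of_nonneg_left hb
          positivity
    _ = ‖f‖ := by
          rw [← mul_assoc, inv_mul_cancel₀ (by positivity), one_mul]

/-- The transfer operator `L : l∞(X) → l∞(X)`:
`L(f)(x)` is the average of `f` over `σ⁻¹({x})` if `x ∈ σ(X)`, and `0` otherwise. -/
def Lmap (X : Set (ℕ → 𝔞)) (f : Linf X) : Linf X :=
  ⟨fun x => if (x : ℕ → 𝔞) ∈ shift '' X then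
      (((preims X (x : ℕ → 𝔞)).ncard : ℂ))⁻¹ * ∑ᶠ y ∈ preims X (x : ℕ → 𝔞), f y
    else 0,
    memℓp_infty ⟨‖f‖, by
      rintro r ⟨x, rfl⟩
      dsimp only
      split_ifs with h
      · exact aux_norm_le X f _ (preims_finite X _)
      · rw [norm_zero]; exact norm_nonneg f⟩⟩

/-!
`α` is composition with `σ`, a continuous `*`-homomorphism, and it sends `χ_{C(u,v)}` to
`∑ₐ χ_{C(u,av)}`. The transfer operator `L` is not multiplicative, but `L f = h · ∑ₐ βₐ f`, where
`βₐ f (x) = f(ax)` (and `0` if `ax ∉ X`) is again a continuous `*`-homomorphism, sending each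
`χ_{C(u,v)}` to a product of at most two generators or to `0`, and `h(x) = 1 / #{a | ax ∈ X}`
(read as `0` when there is no such `a`, that is when `x ∉ σ(X)`) is a polynomial without constant
term in `∑ₐ χ_{C(a,ε)}`, a function with values in `{0, …, #𝔞}`. A continuous `*`-homomorphism
mapping the generators into the closed `*`-subalgebra `D_X` maps all of `D_X` into it.
-/

section lpPullback

variable {ι κ : Type*}

lemma norm_optionElim_le (o : Option ι) (f : lp (fun _ : ι => ℂ) ∞) : ‖o.elim 0 f‖ ≤ ‖f‖ := by
  cases o with
  | none => simp [Option.elim]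
  | some i => exact lp.norm_apply_le_norm ENNReal.top_ne_zero f i

def lpPullback (g : κ → Option ι) (f : lp (fun _ : ι => ℂ) ∞) : lp (fun _ : κ => ℂ) ∞ :=
  ⟨fun k => (g k).elim 0 f, memℓp_infty ⟨‖f‖, by
    rintro _ ⟨k, rfl⟩
    exact norm_optionElim_le (g k) f⟩⟩

@[simp]
lemma lpPullback_apply (g : κ → Option ι) (f : lp (fun _ : ι => ℂ) ∞) (k : κ) :
    lpPullback g f k = (g k).elim 0 f := rfl

lemma norm_lpPullback_le (g : κ → Option ι) (f : lp (fun _ : ι => ℂ) ∞) :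
    ‖lpPullback g f‖ ≤ ‖f‖ :=
  lp.norm_le_of_forall_le (norm_nonneg f) fun k => norm_optionElim_le (g k) f

def lpPullbackHom (g : κ → Option ι) :
    lp (fun _ : ι => ℂ) ∞ →⋆ₙₐ[ℂ] lp (fun _ : κ => ℂ) ∞ where
  toFun := lpPullback g
  map_smul' c f := by ext k; cases hk : g k <;> simp [hk, Option.elim]
  map_zero' := by ext k; cases hk : g k <;> simp [hk, Option.elim]
  map_add' f f' := by ext k; cases hk : g k <;> simp [hk, Option.elim]
  map_mul' f f' := by ext k; cases hk : g k <;> simp [hk, Option.elim, lp.infty_coeFn_mul]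
  map_star' f := by ext k; cases hk : g k <;> simp [hk, Option.elim]

lemma lpPullbackHom_apply (g : κ → Option ι) (f : lp (fun _ : ι => ℂ) ∞) :
    lpPullbackHom g f = lpPullback g f := rfl

lemma continuous_lpPullbackHom (g : κ → Option ι) : Continuous (lpPullbackHom g) :=
  AddMonoidHomClass.continuous_of_bound _ 1 fun f => by
    simpa [lpPullbackHom_apply] using norm_lpPullback_le g f

end lpPullback

lemma NonUnitalStarAlgHom.mapsTo_topologicalClosure_adjoin {R A B : Type*} [CommSemiring R]
    [StarRing R] [NonUnitalSemiring A] [StarRing A] [Module R A] [IsScalarTower R A A]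
    [SMulCommClass R A A] [StarModule R A] [TopologicalSpace A] [IsSemitopologicalSemiring A]
    [ContinuousStar A] [ContinuousConstSMul R A] [NonUnitalSemiring B] [Star B] [Module R B]
    [TopologicalSpace B] (φ : A →⋆ₙₐ[R] B) (hφ : Continuous φ) {s : Set A}
    {S : NonUnitalStarSubalgebra R B} (hS : IsClosed (S : Set B)) (hs : Set.MapsTo φ s S) :
    Set.MapsTo φ (NonUnitalStarAlgebra.adjoin R s).topologicalClosure S := by
  have hadjoin : NonUnitalStarAlgebra.adjoin R s ≤ S.comap φ := NonUnitalStarAlgebra.adjoin_le hs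
  intro f hf
  simpa [hS.closure_eq] using map_mem_closure hφ hf hadjoin

lemma pow_succ_mem {M S : Type*} [Monoid M] [SetLike S M] [MulMemClass S M] {s : S} {g : M}
    (hg : g ∈ s) (i : ℕ) : g ^ (i + 1) ∈ s := by
  induction i with
  | zero => simpa using hg
  | succ i ih => simpa [pow_succ] using mul_mem ih hg

lemma exists_mem_apply_eq_comp {κ S : Type*} [SetLike S (lp (fun _ : κ => ℂ) ∞)]
    [NonUnitalSubsemiringClass S (lp (fun _ : κ => ℂ) ∞)]
    [SMulMemClass S ℂ (lp (fun _ : κ => ℂ) ∞)] {s : S} {g : lp (fun _ : κ => ℂ) ∞} (hg : g ∈ s)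
    {c : κ → ℕ} (hgc : ∀ k, g k = c k) {n : ℕ} (hcn : ∀ k, c k ≤ n)
    (φ : ℕ → ℂ) (hφ : φ 0 = 0) : ∃ h ∈ s, ∀ k, h k = φ (c k) := by
  -- `φ ∘ c = p ∘ g` for the interpolation polynomial `p` of `φ` on `{0, …, n}`, and `p(g)` needs
  -- no unit because `p 0 = φ 0 = 0`.
  set p := Lagrange.interpolate (Finset.range (n + 1)) (fun i : ℕ => (i : ℂ)) φ
  have hinj : Set.InjOn (fun i : ℕ => (i : ℂ)) (Finset.range (n + 1)) :=
    fun i _ j _ hij => Nat.cast_injective hij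
  have hp : ∀ i ≤ n, p.eval (i : ℂ) = φ i := fun i hi =>
    Lagrange.eval_interpolate_at_node φ hinj (Finset.mem_range.mpr (Nat.lt_succ_of_le hi))
  have hcoeff0 : p.coeff 0 = 0 := by
    simpa [Polynomial.coeff_zero_eq_eval_zero, hφ] using hp 0 (Nat.zero_le n)
  refine ⟨∑ i ∈ Finset.range p.natDegree, p.coeff (i + 1) • g ^ (i + 1),
    sum_mem fun i _ => SMulMemClass.smul_mem _ (pow_succ_mem hg i), fun k => ?_⟩
  rw [← hp (c k) (hcn k), Polynomial.eval_eq_sum_range, Finset.sum_range_succ', lp.coeFn_sum,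
    Finset.sum_apply]
  simp [lp.infty_coeFn_pow, hgc, hcoeff0]

section ShiftSpace

omit [Fintype 𝔞] [Nonempty 𝔞] [TopologicalSpace 𝔞] [DiscreteTopology 𝔞]

variable {X : Set (ℕ → 𝔞)}

@[simp]
lemma wcat_nil (x : ℕ → 𝔞) : wcat [] x = x := by
  funext n
  simp [wcat]

lemma wcat_append (u w : List 𝔞) (x : ℕ → 𝔞) : wcat (u ++ w) x = wcat u (wcat w x) := by
  funext n
  simp only [wcat, List.length_append, List.get_eq_getElem]
  split_ifs <;> simp_all [Nat.sub_sub] <;> omega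

@[simp]
lemma wcat_singleton_zero (a : 𝔞) (x : ℕ → 𝔞) : wcat [a] x 0 = a := by
  simp [wcat]

@[simp]
lemma shift_wcat_singleton (a : 𝔞) (x : ℕ → 𝔞) : shift (wcat [a] x) = x := by
  funext n
  simp [shift, wcat]

lemma eq_wcat_singleton_iff {y x : ℕ → 𝔞} {a : 𝔞} : y = wcat [a] x ↔ y 0 = a ∧ shift y = x := by
  constructor
  · rintro rfl
    simp
  · rintro ⟨rfl, rfl⟩
    funext n
    cases n <;> simp [wcat, shift]

lemma mem_cyl_nil {u : List 𝔞} {y : ℕ → 𝔞} : y ∈ cyl X u [] ↔ y ∈ X ∧ wcat u y ∈ X := by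
  constructor
  · rintro ⟨x, hx, hux, -, rfl⟩
    simpa using ⟨hx, hux⟩
  · rintro ⟨hy, huy⟩
    exact ⟨y, hy, huy, by simpa using hy, by simp⟩

lemma mem_cyl_cons_iff {u v : List 𝔞} {a : 𝔞} {y : ℕ → 𝔞} (hsy : shift y ∈ X) :
    y ∈ cyl X u (a :: v) ↔ y ∈ X ∧ y 0 = a ∧ shift y ∈ cyl X u v := by
  have hcons : ∀ x, wcat (a :: v) x = wcat [a] (wcat v x) := wcat_append [a] v
  constructor
  · rintro ⟨x, hx, hux, havx, rfl⟩
    rw [hcons] at havx hsy ⊢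
    rw [shift_wcat_singleton] at hsy ⊢
    rw [wcat_singleton_zero]
    exact ⟨havx, rfl, x, hx, hux, hsy, rfl⟩
  · rintro ⟨hy, rfl, x, hx, hux, -, hyx⟩
    have hy_eq : y = wcat (y 0 :: v) x := by rw [hcons, eq_wcat_singleton_iff]; exact ⟨rfl, hyx⟩
    exact ⟨x, hx, hux, hy_eq ▸ hy, hy_eq⟩

lemma cyl_subset (u v : List 𝔞) : cyl X u v ⊆ X := by
  rintro _ ⟨x, -, -, hvx, rfl⟩
  exact hvx

lemma chi_apply (S : Set (ℕ → 𝔞)) (x : X) :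
    chi X S x = S.indicator (fun _ => (1 : ℂ)) (x : ℕ → 𝔞) := rfl

lemma chi_inter (S T : Set (ℕ → 𝔞)) : chi X (S ∩ T) = chi X S * chi X T := by
  ext x
  simp only [lp.infty_coeFn_mul, Pi.mul_apply, chi_apply, Set.indicator_apply, Set.mem_inter_iff]
  split_ifs <;> simp_all

lemma chi_congr {S T : Set (ℕ → 𝔞)} (h : ∀ x ∈ X, x ∈ S ↔ x ∈ T) : chi X S = chi X T := by
  ext x
  simp [chi_apply, Set.indicator_apply, h x x.2]

lemma chi_empty : chi X ∅ = 0 := by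
  ext x
  simp [chi_apply]

lemma mapsTo_Dalg (φ : Linf X →⋆ₙₐ[ℂ] Linf X) (hφ : Continuous φ)
    (hgen : ∀ u v, φ (chi X (cyl X u v)) ∈ Dalg X) : Set.MapsTo φ (Dalg X) (Dalg X) :=
  φ.mapsTo_topologicalClosure_adjoin hφ (NonUnitalStarSubalgebra.isClosed_topologicalClosure _)
    (by rintro _ ⟨u, v, rfl⟩; exact hgen u v)

variable (X) in
def shiftHom (hX : ∀ x ∈ X, shift x ∈ X) : Linf X →⋆ₙₐ[ℂ] Linf X :=
  lpPullbackHom fun x => some ⟨shift x, hX x x.2⟩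

lemma shiftHom_apply (hX : ∀ x ∈ X, shift x ∈ X) (f : Linf X) :
    shiftHom X hX f = alphaMap X hX f := rfl

lemma shiftHom_chi_cyl [Fintype 𝔞] (hX : ∀ x ∈ X, shift x ∈ X) (u v : List 𝔞) :
    shiftHom X hX (chi X (cyl X u v)) = ∑ a, chi X (cyl X u (a :: v)) := by
  ext y
  rw [lp.coeFn_sum, Finset.sum_apply]
  simp [shiftHom, lpPullbackHom_apply, Option.elim, chi_apply, Set.indicator_apply,
    mem_cyl_cons_iff (hX y y.2), ite_and]

variable (X) in
def prependHom (a : 𝔞) : Linf X →⋆ₙₐ[ℂ] Linf X :=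
  lpPullbackHom fun x => if h : wcat [a] x ∈ X then some ⟨wcat [a] x, h⟩ else none

lemma prependHom_apply (a : 𝔞) (f : Linf X) (x : X) :
    prependHom X a f x = if h : wcat [a] x ∈ X then f ⟨wcat [a] x, h⟩ else 0 := by
  simp only [prependHom, lpPullbackHom_apply, lpPullback_apply]
  split_ifs <;> rfl

lemma prependHom_chi (a : 𝔞) {S : Set (ℕ → 𝔞)} (hS : S ⊆ X) :
    prependHom X a (chi X S) = chi X {x | wcat [a] x ∈ S} := by
  ext x
  rw [prependHom_apply]
  split_ifs with h
  · rfl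
  · simp only [chi_apply, Set.indicator_apply, Set.mem_ofPred_eq]
    rw [if_neg (fun hS' => h (hS hS'))]

lemma eq_wcat_of_mem_preims {x : ℕ → 𝔞} {y : X} (hy : y ∈ preims X x) :
    (y : ℕ → 𝔞) = wcat [y.1 0] x :=
  eq_wcat_singleton_iff.mpr ⟨rfl, hy⟩

variable (X) in
def preimsEquiv (x : ℕ → 𝔞) : preims X x ≃ {a : 𝔞 // wcat [a] x ∈ X} where
  toFun y := ⟨y.1.1 0, eq_wcat_of_mem_preims y.2 ▸ y.1.2⟩
  invFun a := ⟨⟨wcat [a.1] x, a.2⟩, shift_wcat_singleton a.1 x⟩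
  left_inv y := Subtype.ext (Subtype.ext (eq_wcat_of_mem_preims y.2).symm)
  right_inv a := by simp

end ShiftSpace

lemma prependHom_chi_cyl_mem {X : Set (ℕ → 𝔞)} (a : 𝔞) (u v : List 𝔞) :
    prependHom X a (chi X (cyl X u v)) ∈ Dalg X := by
  rw [prependHom_chi a (cyl_subset u v)]
  cases v with
  | nil =>
    rw [chi_congr (T := cyl X [a] [] ∩ cyl X (u ++ [a]) []), chi_inter]
    · exact mul_mem (chi_cyl_mem_Dalg X _ _) (chi_cyl_mem_Dalg X _ _)
    · intro x hx
      simp [mem_cyl_nil, wcat_append, hx]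
  | cons b v =>
    by_cases hab : a = b
    · subst hab
      rw [chi_congr (T := cyl X [a] [] ∩ cyl X u v), chi_inter]
      · exact mul_mem (chi_cyl_mem_Dalg X _ _) (chi_cyl_mem_Dalg X _ _)
      · intro x hx
        simp [mem_cyl_cons_iff (X := X) (y := wcat [a] x) (by simpa using hx), mem_cyl_nil, hx]
    · rw [chi_congr (T := ∅), chi_empty]
      · exact zero_mem _
      · intro x hx
        simp [mem_cyl_cons_iff (X := X) (y := wcat [a] x) (by simpa using hx), hab]

lemma exists_mem_Dalg_apply_eq_inv_card (X : Set (ℕ → 𝔞)) :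
    ∃ h ∈ Dalg X, ∀ x : X, h x = (Fintype.card {a : 𝔞 // wcat [a] x ∈ X} : ℂ)⁻¹ := by
  have hcount : ∀ x : X,
      (∑ a, chi X (cyl X [a] [])) x = Fintype.card {a : 𝔞 // wcat [a] x ∈ X} := by
    intro x
    rw [lp.coeFn_sum, Finset.sum_apply]
    simp [chi_apply, Set.indicator_apply, mem_cyl_nil, Fintype.card_subtype]
  exact exists_mem_apply_eq_comp (sum_mem fun a _ => chi_cyl_mem_Dalg X [a] []) hcount
    (fun _ => Fintype.card_subtype_le _) (fun n => (n : ℂ)⁻¹) (by simp)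

lemma Lmap_apply (X : Set (ℕ → 𝔞)) (f : Linf X) (x : X) :
    Lmap X f x = (Fintype.card {a : 𝔞 // wcat [a] x ∈ X} : ℂ)⁻¹ * ∑ a, prependHom X a f x := by
  have hcard : (preims X x).ncard = Fintype.card {a : 𝔞 // wcat [a] x ∈ X} := by
    rw [← Nat.card_coe_set_eq, Nat.card_congr (preimsEquiv X x), Nat.card_eq_fintype_card]
  have hsum : ∑ᶠ y ∈ preims X x, f y = ∑ a, prependHom X a f x := by
    rw [← finsum_set_coe_eq_finsum_mem, ← finsum_comp_equiv (preimsEquiv X x).symm,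
      finsum_eq_sum_of_fintype, ← Fintype.sum_subtype_add_sum_subtype (fun a => wcat [a] x ∈ X)]
    have hpos : ∀ a : {a // wcat [a] x ∈ X}, prependHom X a f x = f ⟨_, a.2⟩ := fun a => by
      rw [prependHom_apply, dif_pos a.2]
    have hneg : ∀ a : {a // wcat [a] x ∉ X}, prependHom X a f x = 0 := fun a => by
      rw [prependHom_apply, dif_neg a.2]
    simp [hpos, hneg, preimsEquiv]
  show (if (x : ℕ → 𝔞) ∈ shift '' X then _ else 0) = _
  rw [hcard, hsum]
  split_ifs with hx
  · rfl
  · have : IsEmpty {a : 𝔞 // wcat [a] x ∈ X} :=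
      ⟨fun a => hx ⟨_, a.2, shift_wcat_singleton a.1 x⟩⟩
    simp

lemma Lmap_eq_mul_sum (X : Set (ℕ → 𝔞)) {h : Linf X}
    (hh : ∀ x : X, h x = (Fintype.card {a : 𝔞 // wcat [a] x ∈ X} : ℂ)⁻¹) (f : Linf X) :
    Lmap X f = h * ∑ a, prependHom X a f := by
  ext x
  rw [Lmap_apply, lp.infty_coeFn_mul, Pi.mul_apply, hh, lp.coeFn_sum, Finset.sum_apply]

theorem Dalg_closed_under_alpha_and_L_general (X : Set (ℕ → 𝔞))
    (hXinv : ∀ x ∈ X, shift x ∈ X)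
    (f : Linf X) (hf : f ∈ Dalg X) :
    alphaMap X hXinv f ∈ Dalg X ∧ Lmap X f ∈ Dalg X := by
  constructor
  · have hgen : ∀ u v, shiftHom X hXinv (chi X (cyl X u v)) ∈ Dalg X := fun u v => by
      rw [shiftHom_chi_cyl]
      exact sum_mem fun a _ => chi_cyl_mem_Dalg X u (a :: v)
    rw [← shiftHom_apply]
    exact mapsTo_Dalg _ (continuous_lpPullbackHom _) hgen hf
  · obtain ⟨h, hh_mem, hh⟩ := exists_mem_Dalg_apply_eq_inv_card X
    rw [Lmap_eq_mul_sum X hh]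
    refine mul_mem hh_mem (sum_mem fun a _ => ?_)
    exact mapsTo_Dalg _ (continuous_lpPullbackHom _) (prependHom_chi_cyl_mem a) hf

/-- `D_X` is closed under `α` and `L`: if `f ∈ D_X`, then
`α(f) ∈ D_X` and `L(f) ∈ D_X`. -/
theorem Dalg_closed_under_alpha_and_L (X : Set (ℕ → 𝔞)) (hXclosed : IsClosed X)
    (hXinv : ∀ x ∈ X, shift x ∈ X)
    (f : Linf X) (hf : f ∈ Dalg X) :
    alphaMap X hXinv f ∈ Dalg X ∧ Lmap X f ∈ Dalg X :=
  Dalg_closed_under_alpha_and_L_general X hXinv f hf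

end
end

section
/- For all natural numbers 0 ≤ k < l, the diagram formed by δ_k^l, I_k^l, I_{k+1}^l and δ_k^{l+1} commutes: δ_k^{l+1} ∘ I_k^l = I_{k+1}^l ∘ δ_k^l as linear maps from ℤ^{M_k^l} to ℤ^{M_{k+1}^{l+1}}. -/
open scoped ENNReal
open Classical
set_option linter.unusedSectionVars false
set_option synthInstance.maxHeartbeats 1000000
set_option maxHeartbeats 1000000

noncomputable section

variable {𝔞 : Type*} [Fintype 𝔞] [Nonempty 𝔞] [TopologicalSpace 𝔞] [DiscreteTopology 𝔞]

/-- `P_k(x) = {u ∈ 𝔞^k : ux ∈ X}`. -/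
def Pk (X : Set (ℕ → 𝔞)) (k : ℕ) (x : ℕ → 𝔞) : Set (List 𝔞) :=
  {u | u.length = k ∧ wcat u x ∈ X}

/-- `l`-past equivalence on `X`: `x ∼_l y` iff `⋃_{k≤l} P_k(x) = ⋃_{k≤l} P_k(y)`. -/
def pastSetoid (X : Set (ℕ → 𝔞)) (l : ℕ) : Setoid X where
  r x y := (⋃ k ≤ l, Pk X k (x : ℕ → 𝔞)) = ⋃ k ≤ l, Pk X k (y : ℕ → 𝔞)
  iseqv := ⟨fun _ => rfl, Eq.symm, Eq.trans⟩

/-- The (finite) set of `l`-past equivalence classes of `X`. -/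
abbrev PastQuot (X : Set (ℕ → 𝔞)) (l : ℕ) : Type _ := Quotient (pastSetoid X l)

/-- An `l`-past equivalence class, as a subset of `X`. -/
def clsOf (X : Set (ℕ → 𝔞)) (l : ℕ) (q : PastQuot X l) : Set X :=
  {y : X | Quotient.mk (pastSetoid X l) y = q}

lemma mem_iUnion_Pk_length_le {X : Set (ℕ → 𝔞)} {l : ℕ} {x : ℕ → 𝔞} {u : List 𝔞}
    (h : u ∈ ⋃ k ≤ l, Pk X k x) : u.length ≤ l := by
  simp only [Set.mem_iUnion, Pk, Set.mem_setOf_eq] at h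
  obtain ⟨k, hk, hlen, -⟩ := h
  omega

lemma pastQuot_finite (X : Set (ℕ → 𝔞)) (l : ℕ) : Finite (PastQuot X l) := by
  have hlift : ∀ a b : X, (pastSetoid X l).r a b →
      ({u : {u : List 𝔞 // u.length ≤ l} | (u : List 𝔞) ∈ ⋃ k ≤ l, Pk X k (a : ℕ → 𝔞)}
        : Set {u : List 𝔞 // u.length ≤ l}) =
      {u : {u : List 𝔞 // u.length ≤ l} | (u : List 𝔞) ∈ ⋃ k ≤ l, Pk X k (b : ℕ → 𝔞)} := by
    intro a b hab
    have : (⋃ k ≤ l, Pk X k (a : ℕ → 𝔞)) = ⋃ k ≤ l, Pk X k (b : ℕ → 𝔞) := hab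
    rw [this]
  haveI : Finite {u : List 𝔞 // u.length ≤ l} := (List.finite_length_le 𝔞 l).to_subtype
  apply Finite.of_injective (f := fun q : PastQuot X l => Quotient.lift _ hlift q)
  intro q₁ q₂ h
  obtain ⟨a, rfl⟩ := Quotient.exists_rep q₁
  obtain ⟨b, rfl⟩ := Quotient.exists_rep q₂
  apply Quotient.sound
  show (⋃ k ≤ l, Pk X k (a : ℕ → 𝔞)) = ⋃ k ≤ l, Pk X k (b : ℕ → 𝔞)
  simp only [Quotient.lift_mk] at h
  ext u
  constructor
  · intro hu
    have hlen : u.length ≤ l := mem_iUnion_Pk_length_le hu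
    have := Set.ext_iff.mp h ⟨u, hlen⟩
    exact this.mp hu
  · intro hu
    have hlen : u.length ≤ l := mem_iUnion_Pk_length_le hu
    have := Set.ext_iff.mp h ⟨u, hlen⟩
    exact this.mpr hu

/-- `M_k^l`: the set of `l`-past equivalence classes `E` with `P_k(E) ≠ ∅`. -/
def Mset (X : Set (ℕ → 𝔞)) (k l : ℕ) : Set (PastQuot X l) :=
  {q | ∃ x : X, Quotient.mk (pastSetoid X l) x = q ∧ (Pk X k (x : ℕ → 𝔞)).Nonempty}

/-- The entry `I_l(i,j)`: `1` if `E_i^{l+1} ⊆ E_j^l`, else `0`. -/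
def Ient (X : Set (ℕ → 𝔞)) (l : ℕ) (i : PastQuot X (l + 1)) (j : PastQuot X l) : ℤ :=
  if clsOf X (l + 1) i ⊆ clsOf X l j then 1 else 0

/-- `aE = {ax ∈ X : x ∈ E}` for a letter `a` and a set `E ⊆ X`. -/
def lset (X : Set (ℕ → 𝔞)) (a : 𝔞) (s : Set X) : Set X :=
  {y : X | ∃ x ∈ s, (y : ℕ → 𝔞) = wcat [a] (x : ℕ → 𝔞)}

/-- The entry `A_l(i,j,a)`: `1` if `∅ ≠ aE_i^{l+1} ⊆ E_j^l`, else `0`. -/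
def Aent (X : Set (ℕ → 𝔞)) (l : ℕ) (i : PastQuot X (l + 1)) (j : PastQuot X l) (a : 𝔞) : ℤ :=
  if (lset X a (clsOf X (l + 1) i)).Nonempty ∧ lset X a (clsOf X (l + 1) i) ⊆ clsOf X l j
    then 1 else 0

/-- The linear map `ℤ^M → ℤ^N` with matrix entries `c : N → M → ℤ`,
sending `e_j` to `∑_i c i j • e_i`. -/
def matLin {M N : Type*} [Finite M] (c : N → M → ℤ) : (M → ℤ) →ₗ[ℤ] (N → ℤ) where
  toFun f := fun i => ∑ᶠ j : M, c i j * f j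
  map_add' f g := by
    funext i
    calc ∑ᶠ j : M, c i j * (f j + g j)
        = ∑ᶠ j : M, (c i j * f j + c i j * g j) := finsum_congr fun j => mul_add _ _ _
      _ = (∑ᶠ j : M, c i j * f j) + ∑ᶠ j : M, c i j * g j :=
          finsum_add_distrib (Set.toFinite _) (Set.toFinite _)
  map_smul' r f := by
    funext i
    simp only [Pi.smul_apply, smul_eq_mul, RingHom.id_apply]
    calc ∑ᶠ j : M, c i j * (r * f j)
        = ∑ᶠ j : M, r * (c i j * f j) := finsum_congr fun j => by ring
      _ = r * ∑ᶠ j : M, c i j * f j := (mul_finsum _ _).symm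

/-- The map `I_k^l : ℤ^{M_k^l} → ℤ^{M_k^{l+1}}`, `e_j ↦ ∑_{i ∈ M_k^{l+1}} I_l(i,j) e_i`. -/
def Imap (X : Set (ℕ → 𝔞)) (k l : ℕ) : (Mset X k l → ℤ) →ₗ[ℤ] (Mset X k (l + 1) → ℤ) :=
  haveI : Finite (PastQuot X l) := pastQuot_finite X l
  matLin fun (i : Mset X k (l + 1)) (j : Mset X k l) =>
    Ient X l (i : PastQuot X (l + 1)) (j : PastQuot X l)

/-- The map `A_k^l : ℤ^{M_k^l} → ℤ^{M_{k+1}^{l+1}}`,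
`e_j ↦ ∑_{i ∈ M_{k+1}^{l+1}} ∑_{a ∈ 𝔞} A_l(i,j,a) e_i`. -/
def Amap (X : Set (ℕ → 𝔞)) (k l : ℕ) : (Mset X k l → ℤ) →ₗ[ℤ] (Mset X (k + 1) (l + 1) → ℤ) :=
  haveI : Finite (PastQuot X l) := pastQuot_finite X l
  matLin fun (i : Mset X (k + 1) (l + 1)) (j : Mset X k l) =>
    ∑ a : 𝔞, Aent X l (i : PastQuot X (l + 1)) (j : PastQuot X l) a

/-- The map `δ_k^l : ℤ^{M_k^l} → ℤ^{M_{k+1}^l}`, `e_j ↦ e_j` if `j ∈ M_{k+1}^l`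
and `e_j ↦ 0` otherwise. -/
def Deltamap (X : Set (ℕ → 𝔞)) (k l : ℕ) : (Mset X k l → ℤ) →ₗ[ℤ] (Mset X (k + 1) l → ℤ) :=
  haveI : Finite (PastQuot X l) := pastQuot_finite X l
  matLin fun (i : Mset X (k + 1) l) (j : Mset X k l) =>
    if (i : PastQuot X l) = (j : PastQuot X l) then 1 else 0

/-! Both composites have the matrix entry `I_l(i,j)` at `(i,j) ∈ M_{k+1}^{l+1} × M_k^l`. On the
left this is because `M_{k+1}^{l+1} ⊆ M_k^{l+1}`: dropping the first letter of a word in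
`P_{k+1}(x)` gives a word in `P_k(x)`, since `σ(X) ⊆ X`. On the right it is because
`I_l(i,j) = 1` means `E_i^{l+1} ⊆ E_j^l`, so a point of `E_i^{l+1}` with nonempty `P_{k+1}`
lies in `E_j^l` and `j ∈ M_{k+1}^l`. -/

theorem finsum_subtype_ite_eq_mul {R α : Type*} [Semiring R] [DecidableEq α] (s : Set α)
    (a : α) (f : α → R) :
    ∑ᶠ b : s, (if a = b then 1 else 0) * f b = if a ∈ s then f a else 0 := by
  by_cases ha : a ∈ s
  · rw [if_pos ha, finsum_eq_single _ ⟨a, ha⟩, if_pos rfl, one_mul]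
    intro b hb
    rw [if_neg fun h => hb (Subtype.ext h.symm), zero_mul]
  · rw [if_neg ha]
    refine finsum_eq_zero_of_forall_eq_zero fun b => ?_
    rw [if_neg fun h : a = b => ha (h ▸ b.2), zero_mul]

theorem finsum_subtype_mul_ite_eq {R α : Type*} [CommSemiring R] [DecidableEq α] (s : Set α)
    (a : α) (f : α → R) :
    ∑ᶠ b : s, f b * (if (b : α) = a then 1 else 0) = if a ∈ s then f a else 0 := by
  simpa only [mul_comm, eq_comm] using finsum_subtype_ite_eq_mul s a f

theorem matLin_comp {M N P : Type*} [Finite M] [Finite N] (c : P → N → ℤ) (d : N → M → ℤ) :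
    (matLin c).comp (matLin d) = matLin (fun p m => ∑ᶠ n, c p n * d n m) := by
  have := Fintype.ofFinite M
  have := Fintype.ofFinite N
  refine LinearMap.ext fun f => funext fun p => ?_
  change ∑ᶠ n, c p n * ∑ᶠ m, d n m * f m = ∑ᶠ m, (∑ᶠ n, c p n * d n m) * f m
  simp only [finsum_eq_sum_of_fintype, Finset.mul_sum, Finset.sum_mul, mul_assoc]
  exact Finset.sum_comm

theorem shift_wcat (u : List 𝔞) (hu : u ≠ []) (x : ℕ → 𝔞) :
    shift (wcat u x) = wcat u.tail x := by
  have hlen : 0 < u.length := List.length_pos_of_ne_nil hu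
  funext n
  simp only [wcat, shift, List.length_tail]
  by_cases hn : n < u.length - 1
  · rw [dif_pos (by omega), dif_pos hn]
    simp [List.getElem_tail]
  · rw [dif_neg (by omega), dif_neg hn]
    congr 1
    omega

theorem Pk_nonempty_of_Pk_succ_nonempty {X : Set (ℕ → 𝔞)} (hX : ∀ x ∈ X, shift x ∈ X)
    {k : ℕ} {x : ℕ → 𝔞} (h : (Pk X (k + 1) x).Nonempty) : (Pk X k x).Nonempty := by
  obtain ⟨u, hlen, hmem⟩ := h
  have hu : u ≠ [] := List.length_pos_iff.mp (by omega)
  exact ⟨u.tail, by simp [hlen], shift_wcat u hu x ▸ hX _ hmem⟩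

theorem Mset_succ_subset {X : Set (ℕ → 𝔞)} (hX : ∀ x ∈ X, shift x ∈ X) (k l : ℕ) :
    Mset X (k + 1) l ⊆ Mset X k l := by
  rintro q ⟨x, hxq, hne⟩
  exact ⟨x, hxq, Pk_nonempty_of_Pk_succ_nonempty hX hne⟩

theorem Ient_eq_zero_of_notMem_Mset {X : Set (ℕ → 𝔞)} {k l : ℕ} {i : PastQuot X (l + 1)}
    {j : PastQuot X l} (hi : i ∈ Mset X k (l + 1)) (hj : j ∉ Mset X k l) : Ient X l i j = 0 := by
  obtain ⟨x, hxi, hne⟩ := hi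
  exact if_neg fun hsub => hj ⟨x, hsub hxi, hne⟩

theorem deltaI_diagram_commutes_general (X : Set (ℕ → 𝔞))
    (hXinv : ∀ x ∈ X, shift x ∈ X) (k l : ℕ) :
    (Deltamap X k (l + 1)).comp (Imap X k l) = (Imap X (k + 1) l).comp (Deltamap X k l) := by
  have := pastQuot_finite X l
  have := pastQuot_finite X (l + 1)
  simp only [Deltamap, Imap]
  rw [matLin_comp, matLin_comp]
  congr 1
  funext i j
  rw [finsum_subtype_ite_eq_mul _ _ (Ient X l · j), finsum_subtype_mul_ite_eq _ _ (Ient X l i ·),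
    if_pos (Mset_succ_subset hXinv k (l + 1) i.2)]
  split_ifs with hj
  · rfl
  · exact Ient_eq_zero_of_notMem_Mset i.2 hj

/-- for all `0 ≤ k < l`, the diagram formed by `δ_k^l`, `I_k^l`, `I_{k+1}^l`
and `δ_k^{l+1}` commutes: `δ_k^{l+1} ∘ I_k^l = I_{k+1}^l ∘ δ_k^l`. -/
theorem deltaI_diagram_commutes (X : Set (ℕ → 𝔞)) (hXclosed : IsClosed X)
    (hXinv : ∀ x ∈ X, shift x ∈ X) (k l : ℕ) (hkl : k < l) :
    (Deltamap X k (l + 1)).comp (Imap X k l) = (Imap X (k + 1) l).comp (Deltamap X k l) :=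
  deltaI_diagram_commutes_general X hXinv k l

end
end
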